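/- Let V be an algebraic set in 𝔻^n, let 1 ≤ k < n, and write points of ℂ^n = ℂ^k × ℂ^{n−k} as (z',z''). Let π_k : ℂ^n → ℂ^k denote the projection onto the first k coordinates. Suppose a = (a',a'') ∈ V is an isolated point of the fiber π_k^{-1}(a') ∩ V. Then there exist open polydiscs U' ⊆ ℂ^k centered at a' and U'' ⊆ ℂ^{n−k} centered at a'' with U = U' × U'' ⊆ 𝔻^n, such that the restriction π_k : U ∩ V → U' is a proper map, i.e. the preimage in U ∩ V of every compact subset of U' is compact. -/

import Mathlib

open Metric MvPolynomial

noncomputable section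

/-- The open unit polydisc in ℂⁿ. -/
def polydisc (n : ℕ) : Set (Fin n → ℂ) := {z | ∀ i, ‖z i‖ < 1}

/-- The ideal of polynomials vanishing on a set `W ⊆ ℂⁿ`. -/
def vanishingIdeal' {n : ℕ} (W : Set (Fin n → ℂ)) : Ideal (MvPolynomial (Fin n) ℂ) where
  carrier := {p | ∀ z ∈ W, MvPolynomial.eval z p = 0}
  add_mem' := by
    intro a b ha hb z hz
    simp [ha z hz, hb z hz]
  zero_mem' := by intro z hz; simp
  smul_mem' := by
    intro c p hp z hz
    simp [smul_eq_mul, hp z hz]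

/-- `V` is an algebraic subset of the polydisc `𝔻ⁿ`. -/
def IsAlgebraicIn {n : ℕ} (V : Set (Fin n → ℂ)) : Prop :=
  ∃ s : Finset (MvPolynomial (Fin n) ℂ),
    V = polydisc n ∩ {z | ∀ p ∈ s, MvPolynomial.eval z p = 0}

/-- `V` is a one-dimensional algebraic subset of the polydisc `𝔻ⁿ`. -/
def IsOneDimAlgebraicIn {n : ℕ} (V : Set (Fin n → ℂ)) : Prop :=
  ∃ s : Finset (MvPolynomial (Fin n) ℂ),
    V = polydisc n ∩ {z | ∀ p ∈ s, MvPolynomial.eval z p = 0} ∧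
    ringKrullDim (MvPolynomial (Fin n) ℂ ⧸
      vanishingIdeal' {z : Fin n → ℂ | ∀ p ∈ s, MvPolynomial.eval z p = 0}) = 1

/-- `V ⊆ U` has the polynomial extension property with respect to `U`. -/
def HasPolyExtProp {n : ℕ} (U V : Set (Fin n → ℂ)) : Prop :=
  ∀ p : MvPolynomial (Fin n) ℂ,
    ∃ F : (Fin n → ℂ) → ℂ,
      DifferentiableOn ℂ F U ∧
      (∃ C : ℝ, ∀ z ∈ U, ‖F z‖ ≤ C) ∧
      (∀ z ∈ V, F z = MvPolynomial.eval z p) ∧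
      sSup ((fun z => ‖F z‖) '' U) =
        sSup ((fun z => ‖MvPolynomial.eval z p‖) '' V)

/-- `V` is a holomorphic retract of the polydisc `𝔻ⁿ`. -/
def IsHolRetract {n : ℕ} (V : Set (Fin n → ℂ)) : Prop :=
  ∃ r : (Fin n → ℂ) → (Fin n → ℂ),
    DifferentiableOn ℂ r (polydisc n) ∧
    (∀ z ∈ polydisc n, r z ∈ V) ∧
    (∀ z ∈ V, r z = z)

/-- The Möbius (pseudohyperbolic) distance on the unit disc. -/
def mDist (z w : ℂ) : ℝ := ‖(z - w) / (1 - z * (starRingEnd ℂ) w)‖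

/-- A compact-type set `K ⊆ ℂⁿ` is polynomially convex. -/
def PolyConvex {n : ℕ} (K : Set (Fin n → ℂ)) : Prop :=
  K = {z | ∀ p : MvPolynomial (Fin n) ℂ,
        ‖MvPolynomial.eval z p‖ ≤
          sSup ((fun w => ‖MvPolynomial.eval w p‖) '' K)}

/-- `h` is a Möbius automorphism of the unit disc. -/
def IsDiscAut (h : ℂ → ℂ) : Prop :=
  ∃ ω a : ℂ, ‖ω‖ = 1 ∧ ‖a‖ < 1 ∧
    ∀ z : ℂ, h z = ω * ((z - a) / (1 - (starRingEnd ℂ) a * z))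

/-- `w` is a regular point of `V`. -/
def IsRegularPoint {n : ℕ} (V : Set (Fin n → ℂ)) (w : Fin n → ℂ) : Prop :=
  ∃ (Ω : Set (Fin n → ℂ)) (δ : ℝ) (φ : ℂ → Fin n → ℂ),
    IsOpen Ω ∧ w ∈ Ω ∧ 0 < δ ∧
    DifferentiableOn ℂ φ (ball 0 δ) ∧
    Set.InjOn φ (ball 0 δ) ∧
    (∀ l ∈ ball (0:ℂ) δ, deriv φ l ≠ 0) ∧
    φ 0 = w ∧
    V ∩ Ω = (φ '' ball 0 δ) ∩ Ω

/-- The open Euclidean ball of radius `t` centered at the origin of `ℂⁿ`. -/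
def euclBall (n : ℕ) (t : ℝ) : Set (Fin n → ℂ) :=
  {z | ∑ i, ‖z i‖ ^ 2 < t ^ 2}

/-!
Only the closedness of the zero set `Z` of the defining polynomials matters. Choose a closed
polydisc of radius `ρ` about `a`, inside `𝔻ⁿ`, that meets the fiber of `Z` through `a` only in `a`.
The points of `Z` in this polydisc having some coordinate at distance exactly `ρ` from `a` form
a compact set whose projection misses `π_k a`, hence stays at distance `≥ ε` from it. Over the
base polydisc of radius `ε`, `Z` therefore avoids the part of the boundary with fiber coordinates
at distance `ρ`, so the preimage of a compact `K` is a closed subset of a compact closed polydisc.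
-/

theorem isClosed_setOf_forall_mem_eval_eq_zero {σ R : Type*} [CommSemiring R] [TopologicalSpace R]
    [IsTopologicalSemiring R] [T2Space R] (s : Set (MvPolynomial σ R)) :
    IsClosed {z : σ → R | ∀ p ∈ s, eval z p = 0} := by
  simp only [Set.ofPred_forall]
  exact isClosed_biInter fun p _ => isClosed_eq (continuous_eval p) continuous_const

theorem isOpen_polydisc (n : ℕ) : IsOpen (polydisc n) := by
  simp only [polydisc, Set.ofPred_forall]
  exact isOpen_iInter_of_finite fun i => isOpen_lt (by fun_prop) continuous_const

section FiberIsolation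

variable {ι E : Type*} [MetricSpace E] [ProperSpace E]

theorem exists_pos_forall_dist_lt_of_isolated_in_fiber [Finite ι] {Z : Set (ι → E)}
    (hZ : IsClosed Z) (B : Finset ι) {a : ι → E} {ρ : ℝ} (hρ : 0 < ρ)
    (hiso : ∀ z ∈ Z, (∀ i ∈ B, z i = a i) → (∀ j, dist (z j) (a j) ≤ ρ) → z = a) :
    ∃ ε > 0, ε ≤ ρ ∧ ∀ z ∈ Z, (∀ i ∈ B, dist (z i) (a i) < ε) →
      (∀ j, dist (z j) (a j) ≤ ρ) → ∀ j, dist (z j) (a j) < ρ := by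
  set shell := Z ∩ (Set.univ.pi (fun j => closedBall (a j) ρ) ∩
    {z | ∃ j, dist (z j) (a j) = ρ})
  have hshell : IsCompact shell := by
    refine IsCompact.inter_left ?_ hZ
    refine (isCompact_univ_pi fun j => isCompact_closedBall _ _).inter_right ?_
    simp only [Set.ofPred_exists]
    exact isClosed_iUnion_of_finite fun j => isClosed_eq (by fun_prop) continuous_const
  -- The base coordinates of the shell stay away from those of `a`, by compactness.
  have hgap : B.restrict a ∈ (B.restrict '' shell)ᶜ := by
    rintro ⟨z, ⟨hzZ, hzρ, j, hj⟩, hza⟩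
    have hz : z = a := hiso z hzZ (fun i hi => congrFun hza ⟨i, hi⟩) fun j => hzρ j trivial
    rw [hz, dist_self] at hj
    exact hρ.ne hj
  obtain ⟨ε, hε, hball⟩ := Metric.isOpen_iff.mp
    ((hshell.image (B.continuous_restrict)).isClosed.isOpen_compl) _ hgap
  refine ⟨min ε ρ, lt_min hε hρ, min_le_right _ _, fun z hzZ hzB hzρ => ?_⟩
  by_contra! hfar
  obtain ⟨j, hj⟩ := hfar
  refine hball ?_ ⟨z, ⟨hzZ, fun i _ => hzρ i, j, (hzρ j).antisymm hj⟩, rfl⟩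
  rw [mem_ball, dist_pi_lt_iff hε]
  exact fun i => (hzB i i.2).trans_le (min_le_left _ _)

theorem isCompact_inter_pi_ball {T : Set (ι → E)} (hT : IsClosed T) {a : ι → E} {r : ι → ℝ}
    (h : ∀ z ∈ T, (∀ j, dist (z j) (a j) ≤ r j) → ∀ j, dist (z j) (a j) < r j) :
    IsCompact (T ∩ Set.univ.pi fun j => ball (a j) (r j)) := by
  have hclosed : T ∩ Set.univ.pi (fun j => ball (a j) (r j)) =
      T ∩ Set.univ.pi fun j => closedBall (a j) (r j) := by
    refine Set.Subset.antisymm (Set.inter_subset_inter_right _ ?_) fun z ⟨hzT, hz⟩ => ⟨hzT, ?_⟩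
    · exact Set.pi_mono fun j _ => ball_subset_closedBall
    · exact fun j _ => h z hzT (fun j => hz j trivial) j
  rw [hclosed]
  exact (isCompact_univ_pi fun j => isCompact_closedBall _ _).inter_left hT

theorem exists_radii_isCompact_inter_pi_ball [Finite ι] {Z : Set (ι → E)} (hZ : IsClosed Z)
    (B : Finset ι) {a : ι → E} {ρ : ℝ} (hρ : 0 < ρ)
    (hiso : ∀ z ∈ Z, (∀ i ∈ B, z i = a i) → (∀ j, dist (z j) (a j) ≤ ρ) → z = a) :
    ∃ r : ι → ℝ, (∀ j, 0 < r j) ∧ (∀ j, r j ≤ ρ) ∧ ∀ T : Set (ι → E), IsClosed T →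
      (∀ z ∈ T, ∀ i ∈ B, dist (z i) (a i) < r i) →
      IsCompact (Z ∩ T ∩ Set.univ.pi fun j => ball (a j) (r j)) := by
  classical
  obtain ⟨ε, hε, hερ, hgap⟩ := exists_pos_forall_dist_lt_of_isolated_in_fiber hZ B hρ hiso
  set r : ι → ℝ := B.piecewise (fun _ => ε) fun _ => ρ
  have hrρ : ∀ j, r j ≤ ρ := fun j => by by_cases hj : j ∈ B <;> simp [r, hj, hερ]
  refine ⟨r, fun j => by by_cases hj : j ∈ B <;> simp [r, hj, hε, hρ], hrρ,
    fun T hT hTB => isCompact_inter_pi_ball (hZ.inter hT) fun z ⟨hzZ, hzT⟩ hzr j => ?_⟩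
  have hzB : ∀ i ∈ B, dist (z i) (a i) < ε := fun i hi => by simpa [r, hi] using hTB z hzT i hi
  by_cases hj : j ∈ B
  · simpa [r, hj] using hzB j hj
  · simpa [r, hj] using hgap z hzZ hzB (fun j => (hzr j).trans (hrρ j)) j

end FiberIsolation

theorem stmt_4_general (n k : ℕ) (hkn : k < n)
    (V : Set (Fin n → ℂ)) (halg : IsAlgebraicIn V)
    (a : Fin n → ℂ) (ha : a ∈ V)
    (hiso : ∃ Ω : Set (Fin n → ℂ), IsOpen Ω ∧ a ∈ Ω ∧
      {z ∈ V | ∀ i : Fin k, z (Fin.castLE hkn.le i) = a (Fin.castLE hkn.le i)} ∩ Ω = {a}) :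
    ∃ r : Fin n → ℝ, (∀ i, 0 < r i) ∧
      {z : Fin n → ℂ | ∀ i, ‖z i - a i‖ < r i} ⊆ polydisc n ∧
      ∀ K : Set (Fin k → ℂ), IsCompact K →
        K ⊆ {z' : Fin k → ℂ | ∀ i : Fin k,
              ‖z' i - a (Fin.castLE hkn.le i)‖ < r (Fin.castLE hkn.le i)} →
        IsCompact {z ∈ {z : Fin n → ℂ | ∀ i, ‖z i - a i‖ < r i} ∩ V |
          (fun i : Fin k => z (Fin.castLE hkn.le i)) ∈ K} := by
  obtain ⟨s, hV⟩ := halg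
  set Z := {z : Fin n → ℂ | ∀ p ∈ s, eval z p = 0}
  obtain ⟨Ω, hΩ, haΩ, hfiber⟩ := hiso
  obtain ⟨ρ, hρ, hρΩ⟩ : ∃ ρ > 0, closedBall a ρ ⊆ Ω ∩ polydisc n :=
    nhds_basis_closedBall.mem_iff.mp
      ((hΩ.inter (isOpen_polydisc n)).mem_nhds ⟨haΩ, (hV ▸ ha).1⟩)
  set B := Finset.univ.map (Fin.castLEEmb hkn.le)
  have hisolated : ∀ z ∈ Z, (∀ i ∈ B, z i = a i) → (∀ j, dist (z j) (a j) ≤ ρ) → z = a := by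
    intro z hzZ hzB hzρ
    have hz := hρΩ ((dist_pi_le_iff hρ.le).mpr hzρ)
    exact (hfiber ▸ ⟨⟨hV ▸ ⟨hz.2, hzZ⟩, fun i => hzB _ (by simp [B])⟩, hz.1⟩ : z ∈ ({a} : Set _))
  obtain ⟨r, hr, hrρ, hproper⟩ := exists_radii_isCompact_inter_pi_ball
    (isClosed_setOf_forall_mem_eval_eq_zero _) B hρ hisolated
  have hU : {z : Fin n → ℂ | ∀ i, ‖z i - a i‖ < r i} ⊆ polydisc n := fun z hz =>
    (hρΩ ((dist_pi_le_iff hρ.le).mpr fun j =>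
      ((dist_eq_norm _ _).trans_lt (hz j)).le.trans (hrρ j))).2
  refine ⟨r, hr, hU, fun K hK hKa => ?_⟩
  convert hproper _ (hK.isClosed.preimage (by fun_prop : Continuous
    fun (z : Fin n → ℂ) (i : Fin k) => z (Fin.castLE hkn.le i))) ?_ using 1
  · ext z
    simp only [hV, Set.mem_ofPred_eq, Set.mem_inter_iff, Set.mem_preimage, Set.mem_pi,
      Set.mem_univ, true_implies, mem_ball, dist_eq_norm]
    exact ⟨fun ⟨⟨hz, _, hzZ⟩, hzK⟩ => ⟨⟨hzZ, hzK⟩, hz⟩,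
      fun ⟨⟨hzZ, hzK⟩, hz⟩ => ⟨⟨hz, hU hz, hzZ⟩, hzK⟩⟩
  · simp only [B, Finset.mem_map, Finset.mem_univ, true_and, forall_exists_index]
    rintro z hzK _ i rfl
    simpa [dist_eq_norm] using hKa hzK i

/-- If `a ∈ V` is isolated in the fiber `π_k⁻¹(a') ∩ V` of the projection onto the first `k`
coordinates, then there is a polydisc `U = U' × U''` centered at `a`, contained in `𝔻ⁿ`,
such that `π_k : U ∩ V → U'` is proper. -/
theorem stmt_4 (n k : ℕ) (hk1 : 1 ≤ k) (hkn : k < n)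
    (V : Set (Fin n → ℂ)) (halg : IsAlgebraicIn V)
    (a : Fin n → ℂ) (ha : a ∈ V)
    (hiso : ∃ Ω : Set (Fin n → ℂ), IsOpen Ω ∧ a ∈ Ω ∧
      {z ∈ V | ∀ i : Fin k, z (Fin.castLE hkn.le i) = a (Fin.castLE hkn.le i)} ∩ Ω = {a}) :
    ∃ r : Fin n → ℝ, (∀ i, 0 < r i) ∧
      {z : Fin n → ℂ | ∀ i, ‖z i - a i‖ < r i} ⊆ polydisc n ∧
      ∀ K : Set (Fin k → ℂ), IsCompact K →
        K ⊆ {z' : Fin k → ℂ | ∀ i : Fin k,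
              ‖z' i - a (Fin.castLE hkn.le i)‖ < r (Fin.castLE hkn.le i)} →
        IsCompact {z ∈ {z : Fin n → ℂ | ∀ i, ‖z i - a i‖ < r i} ∩ V |
          (fun i : Fin k => z (Fin.castLE hkn.le i)) ∈ K} :=
  stmt_4_general n k hkn V halg a ha hiso
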